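/- Let A be a real symmetric invertible matrix in 3×3 block form A = [[A_p̌p̌, A_p̂p̌ᵀ, A_qp̌ᵀ], [A_p̂p̌, A_p̂p̂, A_qp̂ᵀ], [A_qp̌, A_qp̂, A_qq]], suppose there is a real |p̂|×|p̌| matrix T_p with A_qp̌ = A_qp̂ T_p, and set B_p̌p̌ = A_p̌p̌ − T_pᵀ A_p̂p̌ − A_p̂p̌ᵀ T_p + T_pᵀ A_p̂p̂ T_p and B_p̂p̌ = A_p̂p̌ − A_p̂p̂ T_p. Assume B_p̌p̌ is invertible, let Ā₁ = [[A_p̂p̂ − B_p̂p̌ B_p̌p̌⁻¹ B_p̂p̌ᵀ, A_qp̂ᵀ], [A_qp̂, A_qq]], assume Ā₁ is invertible, let Ḡ₁ = Ā₁⁻¹, and let G = A⁻¹. Then G_p̌p̌ depends only on the (p̂, p̂) diagonal block of Ḡ₁; explicitly, G_p̌p̌ = B_p̌p̌⁻¹ + (B_p̌p̌⁻¹B_p̂p̌ᵀ) (Ḡ₁)_p̂p̂ (B_p̂p̌ B_p̌p̌⁻¹). -/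

import Mathlib

/-!
Regroup the indices as `p̌ ⊕ (p̂ ⊕ q)` and conjugate `A` by the unitriangular matrix
`U = [[1, -T_pᵀ, 0], [0, 1, 0], [0, 0, 1]]`. This does not change the `p̌p̌` block of the inverse,
and since `A_qp̌ = A_qp̂ T_p` it produces the matrix with diagonal blocks `B_p̌p̌` and
`[[A_p̂p̂, A_qp̂ᵀ], [A_qp̂, A_qq]]` coupled only through `B_p̂p̌`. Its Schur complement with respect
to `B_p̌p̌` is `Ā₁`, so the Schur-complement formula for the top-left block of an inverse gives
`G_p̌p̌`; as the coupling vanishes on the `q` indices, only `(Ḡ₁)_p̂p̂` survives.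
-/

open Matrix

namespace Matrix

variable {l m n o p α : Type*}

theorem reindex_sumAssoc_fromBlocks (A₁₁ : Matrix l l α) (A₁₂ : Matrix l m α)
    (A₁₃ : Matrix l n α) (A₂₁ : Matrix m l α) (A₂₂ : Matrix m m α) (A₂₃ : Matrix m n α)
    (A₃₁ : Matrix n l α) (A₃₂ : Matrix n m α) (A₃₃ : Matrix n n α) :
    reindex (Equiv.sumAssoc l m n) (Equiv.sumAssoc l m n)
        (fromBlocks (fromBlocks A₁₁ A₁₂ A₂₁ A₂₂) (fromRows A₁₃ A₂₃) (fromCols A₃₁ A₃₂) A₃₃) =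
      fromBlocks A₁₁ (fromCols A₁₂ A₁₃) (fromRows A₂₁ A₃₁) (fromBlocks A₂₂ A₂₃ A₃₂ A₃₃) := by
  ext (i | i | i) (j | j | j) <;> rfl

theorem toBlocks₁₁_reindex_sumAssoc (M : Matrix ((l ⊕ m) ⊕ n) ((l ⊕ m) ⊕ n) α) :
    (reindex (Equiv.sumAssoc l m n) (Equiv.sumAssoc l m n) M).toBlocks₁₁ =
      M.toBlocks₁₁.toBlocks₁₁ :=
  rfl

theorem fromCols_add_fromCols [Add α] (A₁ B₁ : Matrix l m α) (A₂ B₂ : Matrix l n α) :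
    fromCols A₁ A₂ + fromCols B₁ B₂ = fromCols (A₁ + B₁) (A₂ + B₂) := by
  ext i (j | j) <;> rfl

theorem fromRows_add_fromRows [Add α] (A₁ B₁ : Matrix m l α) (A₂ B₂ : Matrix n l α) :
    fromRows A₁ A₂ + fromRows B₁ B₂ = fromRows (A₁ + B₁) (A₂ + B₂) := by
  ext (i | i) j <;> rfl

theorem fromCols_zero_mul_mul_fromRows_zero [Semiring α] [Fintype m] [Fintype o] [Fintype p]
    (X : Matrix l m α) (G : Matrix (m ⊕ o) (m ⊕ p) α) (Y : Matrix m n α) :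
    fromCols X (0 : Matrix l o α) * G * fromRows Y (0 : Matrix p n α) =
      X * G.toBlocks₁₁ * Y := by
  rw [← fromBlocks_toBlocks G, fromCols_mul_fromBlocks, fromCols_mul_fromRows]
  simp

theorem toBlocks₁₁_fromBlocks_one_zero_mul_mul [Semiring α] [Fintype m] [Fintype n]
    [DecidableEq m] [DecidableEq n] (K : Matrix n m α) (L : Matrix m n α)
    (Y : Matrix (m ⊕ n) (m ⊕ n) α) :
    (fromBlocks 1 0 K 1 * Y * fromBlocks 1 L 0 1).toBlocks₁₁ = Y.toBlocks₁₁ := by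
  rw [← fromBlocks_toBlocks Y]
  simp [fromBlocks_multiply]

theorem fromBlocks_one_mul_fromBlocks_mul_transpose [Semiring α] [Fintype m] [Fintype n]
    [DecidableEq m] [DecidableEq n] (K : Matrix m n α) (P : Matrix m m α) (Q : Matrix m n α)
    (R : Matrix n m α) (D : Matrix n n α) :
    fromBlocks 1 K 0 1 * fromBlocks P Q R D * (fromBlocks 1 K 0 1)ᵀ =
      fromBlocks (P + K * R + (Q + K * D) * Kᵀ) (Q + K * D) (R + D * Kᵀ) D := by
  simp [fromBlocks_transpose, fromBlocks_multiply, Matrix.add_mul]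

variable [CommRing α]

theorem inv_eq_transpose_mul_inv_mul_transpose_mul [Fintype n] [DecidableEq n]
    {U : Matrix n n α} (hU : IsUnit U) (A : Matrix n n α) : A⁻¹ = Uᵀ * (U * A * Uᵀ)⁻¹ * U := by
  have hUt : IsUnit Uᵀ := (isUnit_transpose U).mpr hU
  rw [mul_inv_rev, mul_inv_rev, ← Matrix.mul_assoc, ← Matrix.mul_assoc,
    mul_nonsing_inv _ ((isUnit_iff_isUnit_det _).mp hUt), Matrix.one_mul, Matrix.mul_assoc,
    nonsing_inv_mul _ ((isUnit_iff_isUnit_det _).mp hU), Matrix.mul_one]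

theorem toBlocks₁₁_inv_fromBlocks_one_mul_mul_transpose [Fintype m] [Fintype n]
    [DecidableEq m] [DecidableEq n] (K : Matrix m n α) (A : Matrix (m ⊕ n) (m ⊕ n) α) :
    (fromBlocks 1 K 0 1 * A * (fromBlocks 1 K 0 1)ᵀ)⁻¹.toBlocks₁₁ = A⁻¹.toBlocks₁₁ := by
  have hU : IsUnit (fromBlocks 1 K 0 1 : Matrix (m ⊕ n) (m ⊕ n) α) := by
    simp [isUnit_iff_isUnit_det]
  rw [inv_eq_transpose_mul_inv_mul_transpose_mul hU A]
  simp only [fromBlocks_transpose, transpose_one, transpose_zero]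
  rw [toBlocks₁₁_fromBlocks_one_zero_mul_mul]

theorem toBlocks₁₁_inv_fromBlocks_of_isUnit [Fintype m] [Fintype n] [DecidableEq m]
    [DecidableEq n] (P : Matrix m m α) (Q : Matrix m n α) (R : Matrix n m α) (D : Matrix n n α)
    (hP : IsUnit P) (hS : IsUnit (D - R * P⁻¹ * Q)) :
    (fromBlocks P Q R D)⁻¹.toBlocks₁₁ = P⁻¹ + P⁻¹ * Q * (D - R * P⁻¹ * Q)⁻¹ * R * P⁻¹ := by
  let := hP.invertible
  rw [← invOf_eq_nonsing_inv P] at hS ⊢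
  let := hS.invertible
  let := fromBlocks₁₁Invertible P Q R D
  rw [← invOf_eq_nonsing_inv, invOf_fromBlocks₁₁_eq, toBlocks_fromBlocks₁₁]
  simp only [invOf_eq_nonsing_inv]

theorem unitriangular_congr_fromBlocks_of_eq_mul [Fintype l] [Fintype m] [Fintype n]
    [DecidableEq l] [DecidableEq m] [DecidableEq n] (A₁₁ : Matrix l l α) (A₂₁ : Matrix m l α)
    (A₂₂ : Matrix m m α) (A₃₁ : Matrix n l α) (A₃₂ : Matrix n m α) (A₃₃ : Matrix n n α)
    (T : Matrix m l α) (hA₂₂ : A₂₂ᵀ = A₂₂) (hT : A₃₁ = A₃₂ * T) :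
    fromBlocks 1 (fromCols (-Tᵀ) 0) 0 1 *
        fromBlocks A₁₁ (fromCols A₂₁ᵀ A₃₁ᵀ) (fromRows A₂₁ A₃₁) (fromBlocks A₂₂ A₃₂ᵀ A₃₂ A₃₃) *
        (fromBlocks 1 (fromCols (-Tᵀ) 0) 0 1)ᵀ =
      fromBlocks (A₁₁ - Tᵀ * A₂₁ - A₂₁ᵀ * T + Tᵀ * A₂₂ * T)
        (fromCols (A₂₁ - A₂₂ * T)ᵀ (0 : Matrix l n α)) (fromRows (A₂₁ - A₂₂ * T) 0)
        (fromBlocks A₂₂ A₃₂ᵀ A₃₂ A₃₃) := by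
  rw [fromBlocks_one_mul_fromBlocks_mul_transpose]
  -- without the ascriptions on `0`, `*` elaborates to the `CStarMatrix` multiplication
  have hQ : fromCols A₂₁ᵀ A₃₁ᵀ + fromCols (-Tᵀ) (0 : Matrix l n α) * fromBlocks A₂₂ A₃₂ᵀ A₃₂ A₃₃ =
      fromCols (A₂₁ - A₂₂ * T)ᵀ (0 : Matrix l n α) := by
    simp [fromCols_mul_fromBlocks, fromCols_add_fromCols, hT, hA₂₂, sub_eq_add_neg]
  have hR : fromRows A₂₁ A₃₁ + fromBlocks A₂₂ A₃₂ᵀ A₃₂ A₃₃ * (fromCols (-Tᵀ) (0 : Matrix l n α))ᵀ =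
      fromRows (A₂₁ - A₂₂ * T) (0 : Matrix n l α) := by
    simp [transpose_fromCols, fromBlocks_mul_fromRows, fromRows_add_fromRows, hT,
      sub_eq_add_neg]
  rw [hQ, hR]
  congr 1
  simp [transpose_fromCols, fromCols_mul_fromRows, transpose_sub, transpose_mul, hA₂₂,
    Matrix.sub_mul, Matrix.mul_assoc]
  abel

end Matrix

theorem stmt_12_general (a b c : ℕ)
    (A11 : Matrix (Fin a) (Fin a) ℝ)
    (A21 : Matrix (Fin b) (Fin a) ℝ)
    (A22 : Matrix (Fin b) (Fin b) ℝ)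
    (A31 : Matrix (Fin c) (Fin a) ℝ)
    (A32 : Matrix (Fin c) (Fin b) ℝ)
    (A33 : Matrix (Fin c) (Fin c) ℝ)
    (A : Matrix ((Fin a ⊕ Fin b) ⊕ Fin c) ((Fin a ⊕ Fin b) ⊕ Fin c) ℝ)
    (hA : A = fromBlocks (fromBlocks A11 A21ᵀ A21 A22) (fromRows A31ᵀ A32ᵀ)
        (fromCols A31 A32) A33)
    (hsymm : A.IsSymm)
    (Tp : Matrix (Fin b) (Fin a) ℝ)
    (hTp : A31 = A32 * Tp)
    (B11 : Matrix (Fin a) (Fin a) ℝ)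
    (hB11 : B11 = A11 - Tpᵀ * A21 - A21ᵀ * Tp + Tpᵀ * A22 * Tp)
    (B21 : Matrix (Fin b) (Fin a) ℝ)
    (hB21 : B21 = A21 - A22 * Tp)
    (hB11unit : IsUnit B11)
    (Abar₁ : Matrix (Fin b ⊕ Fin c) (Fin b ⊕ Fin c) ℝ)
    (hAbar₁ : Abar₁ = fromBlocks (A22 - B21 * B11⁻¹ * B21ᵀ) A32ᵀ A32 A33)
    (hAbar₁unit : IsUnit Abar₁)
    (Gbar₁ : Matrix (Fin b ⊕ Fin c) (Fin b ⊕ Fin c) ℝ)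
    (hGbar₁ : Gbar₁ = Abar₁⁻¹) :
    ((A⁻¹).toBlocks₁₁).toBlocks₁₁ =
      B11⁻¹ + (B11⁻¹ * B21ᵀ) * Gbar₁.toBlocks₁₁ * (B21 * B11⁻¹) := by
  have hA22 : A22ᵀ = A22 := by
    rw [hA] at hsymm
    exact (isSymm_fromBlocks_iff.mp (isSymm_fromBlocks_iff.mp hsymm).1).2.2.2
  set e := Equiv.sumAssoc (Fin a) (Fin b) (Fin c)
  set U : Matrix (Fin a ⊕ (Fin b ⊕ Fin c)) (Fin a ⊕ (Fin b ⊕ Fin c)) ℝ :=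
    fromBlocks 1 (fromCols (-Tpᵀ) 0) 0 1
  have hcongr : U * reindex e e A * Uᵀ =
      fromBlocks B11 (fromCols B21ᵀ 0) (fromRows B21 0) (fromBlocks A22 A32ᵀ A32 A33) := by
    rw [hA, reindex_sumAssoc_fromBlocks, unitriangular_congr_fromBlocks_of_eq_mul _ _ _ _ _ _ _
      hA22 hTp, hB11, hB21]
  have hschur : fromBlocks A22 A32ᵀ A32 A33 - fromRows B21 0 * B11⁻¹ * fromCols B21ᵀ 0 = Abar₁ := by
    rw [hAbar₁, fromRows_mul, fromRows_mul_fromCols, sub_eq_add_neg, fromBlocks_neg,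
      fromBlocks_add]
    simp [sub_eq_add_neg]
  calc (A⁻¹).toBlocks₁₁.toBlocks₁₁ = (reindex e e A)⁻¹.toBlocks₁₁ := by
        rw [inv_reindex, toBlocks₁₁_reindex_sumAssoc]
    _ = (U * reindex e e A * Uᵀ)⁻¹.toBlocks₁₁ :=
        (toBlocks₁₁_inv_fromBlocks_one_mul_mul_transpose _ _).symm
    _ = B11⁻¹ + B11⁻¹ * (fromCols B21ᵀ (0 : Matrix (Fin a) (Fin c) ℝ) * Abar₁⁻¹ *
          fromRows B21 (0 : Matrix (Fin c) (Fin a) ℝ)) * B11⁻¹ := by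
        rw [hcongr, toBlocks₁₁_inv_fromBlocks_of_isUnit _ _ _ _ hB11unit (hschur ▸ hAbar₁unit),
          hschur]
        simp only [Matrix.mul_assoc]
    _ = B11⁻¹ + (B11⁻¹ * B21ᵀ) * Gbar₁.toBlocks₁₁ * (B21 * B11⁻¹) := by
        rw [fromCols_zero_mul_mul_fromRows_zero, hGbar₁]
        simp only [Matrix.mul_assoc]

/-- Block inversion with skeletonization, locality form: `G_p̌p̌` depends only on the
`(p̂, p̂)` diagonal block of `Ḡ₁`:
`G_p̌p̌ = B_p̌p̌⁻¹ + (B_p̌p̌⁻¹B_p̂p̌ᵀ) (Ḡ₁)_p̂p̂ (B_p̂p̌ B_p̌p̌⁻¹)`. -/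
theorem stmt_12 (a b c : ℕ)
    (A11 : Matrix (Fin a) (Fin a) ℝ)
    (A21 : Matrix (Fin b) (Fin a) ℝ)
    (A22 : Matrix (Fin b) (Fin b) ℝ)
    (A31 : Matrix (Fin c) (Fin a) ℝ)
    (A32 : Matrix (Fin c) (Fin b) ℝ)
    (A33 : Matrix (Fin c) (Fin c) ℝ)
    (A : Matrix ((Fin a ⊕ Fin b) ⊕ Fin c) ((Fin a ⊕ Fin b) ⊕ Fin c) ℝ)
    (hA : A = fromBlocks (fromBlocks A11 A21ᵀ A21 A22) (fromRows A31ᵀ A32ᵀ)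
        (fromCols A31 A32) A33)
    (hsymm : A.IsSymm) (hAunit : IsUnit A)
    (Tp : Matrix (Fin b) (Fin a) ℝ)
    (hTp : A31 = A32 * Tp)
    (B11 : Matrix (Fin a) (Fin a) ℝ)
    (hB11 : B11 = A11 - Tpᵀ * A21 - A21ᵀ * Tp + Tpᵀ * A22 * Tp)
    (B21 : Matrix (Fin b) (Fin a) ℝ)
    (hB21 : B21 = A21 - A22 * Tp)
    (hB11unit : IsUnit B11)
    (Abar₁ : Matrix (Fin b ⊕ Fin c) (Fin b ⊕ Fin c) ℝ)
    (hAbar₁ : Abar₁ = fromBlocks (A22 - B21 * B11⁻¹ * B21ᵀ) A32ᵀ A32 A33)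
    (hAbar₁unit : IsUnit Abar₁)
    (Gbar₁ : Matrix (Fin b ⊕ Fin c) (Fin b ⊕ Fin c) ℝ)
    (hGbar₁ : Gbar₁ = Abar₁⁻¹) :
    ((A⁻¹).toBlocks₁₁).toBlocks₁₁ =
      B11⁻¹ + (B11⁻¹ * B21ᵀ) * Gbar₁.toBlocks₁₁ * (B21 * B11⁻¹) :=
  stmt_12_general a b c A11 A21 A22 A31 A32 A33 A hA hsymm Tp hTp B11 hB11 B21 hB21 hB11unit Abar₁
    hAbar₁ hAbar₁unit Gbar₁ hGbar₁
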